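/- arXiv:1812.07268 — 5 statements merged into one kernel-verified Lean document; each statement's English description precedes it below -/
import Mathlib

section
/- ('t Hooft identity) For a smooth map n : ℝ² → S² ⊂ ℝ³ and smooth gauge fields A₁, A₂ : ℝ² → ℝ³, with covariant derivative Dᵢn = ∂ᵢn + Aᵢ × n and field strength F₁₂ = ∂₁A₂ - ∂₂A₁ + A₁ × A₂, one has the pointwise identity n·(D₁n × D₂n) - n·F₁₂ = n·(∂₁n × ∂₂n) + ∂₂(n·A₁) - ∂₁(n·A₂). -/
open Matrix

noncomputable def pd1 (f : ℝ × ℝ → Fin 3 → ℝ) (p : ℝ × ℝ) : Fin 3 → ℝ :=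
  fderiv ℝ f p (1, 0)

noncomputable def pd2 (f : ℝ × ℝ → Fin 3 → ℝ) (p : ℝ × ℝ) : Fin 3 → ℝ :=
  fderiv ℝ f p (0, 1)

/-- Partial derivative of a scalar function with respect to the first coordinate. -/
noncomputable def spd1 (f : ℝ × ℝ → ℝ) (p : ℝ × ℝ) : ℝ := fderiv ℝ f p (1, 0)

noncomputable def spd2 (f : ℝ × ℝ → ℝ) (p : ℝ × ℝ) : ℝ := fderiv ℝ f p (0, 1)


lemma fderiv_dot (f g : ℝ × ℝ → Fin 3 → ℝ) (hf : ContDiff ℝ (⊤ : ℕ∞) f) (hg : ContDiff ℝ (⊤ : ℕ∞) g)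
    (p w : ℝ × ℝ) :
    fderiv ℝ (fun q => f q ⬝ᵥ g q) p w = fderiv ℝ f p w ⬝ᵥ g p + f p ⬝ᵥ fderiv ℝ g p w := by
  have hfd := ((hf.differentiable (by simp)) p).hasFDerivAt
  have hgd := ((hg.differentiable (by simp)) p).hasFDerivAt
  have h1 : ∀ i, HasFDerivAt (fun q => f q i)
      ((ContinuousLinearMap.proj i).comp (fderiv ℝ f p)) p := fun i =>
    ((ContinuousLinearMap.proj i (R := ℝ) (φ := fun _ : Fin 3 => ℝ)).hasFDerivAt.comp p hfd : )
  have h2 : ∀ i, HasFDerivAt (fun q => g q i)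
      ((ContinuousLinearMap.proj i).comp (fderiv ℝ g p)) p := fun i =>
    ((ContinuousLinearMap.proj i (R := ℝ) (φ := fun _ : Fin 3 => ℝ)).hasFDerivAt.comp p hgd : )
  have h3 : HasFDerivAt (fun q => f q ⬝ᵥ g q)
      (∑ i : Fin 3, (f p i • (ContinuousLinearMap.proj i).comp (fderiv ℝ g p)
        + g p i • (ContinuousLinearMap.proj i).comp (fderiv ℝ f p))) p := by
    simp only [dotProduct]
    exact HasFDerivAt.fun_sum fun i _ => (h1 i).mul (h2 i)
  rw [h3.fderiv]
  simp [dotProduct, Fin.sum_univ_three]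
  ring
lemma dot_fderiv_self_eq_zero (n : ℝ × ℝ → Fin 3 → ℝ) (hn : ContDiff ℝ (⊤ : ℕ∞) n)
    (hunit : ∀ p, n p ⬝ᵥ n p = 1) (p w : ℝ × ℝ) :
    n p ⬝ᵥ fderiv ℝ n p w = 0 := by
  have h0 : fderiv ℝ (fun q => n q ⬝ᵥ n q) p w = 0 := by
    have : (fun q : ℝ × ℝ => n q ⬝ᵥ n q) = fun _ => (1:ℝ) := funext hunit
    rw [this]; simp
  rw [fderiv_dot n n hn hn p w] at h0
  rw [dotProduct_comm] at h0
  linarith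

/-- 't Hooft identity: for a smooth unit-vector field `n` and smooth gauge fields `A₁, A₂`,
with `Dᵢn = ∂ᵢn + Aᵢ × n` and `F₁₂ = ∂₁A₂ - ∂₂A₁ + A₁ × A₂`,
`n·(D₁n × D₂n) - n·F₁₂ = n·(∂₁n × ∂₂n) + ∂₂(n·A₁) - ∂₁(n·A₂)`. -/
theorem tHooft_identity
    (n A₁ A₂ : ℝ × ℝ → Fin 3 → ℝ)
    (hn : ContDiff ℝ (⊤ : ℕ∞) n) (hA₁ : ContDiff ℝ (⊤ : ℕ∞) A₁) (hA₂ : ContDiff ℝ (⊤ : ℕ∞) A₂)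
    (hunit : ∀ p, n p ⬝ᵥ n p = 1) (p : ℝ × ℝ) :
    let D₁n := pd1 n p + crossProduct (A₁ p) (n p)
    let D₂n := pd2 n p + crossProduct (A₂ p) (n p)
    let F₁₂ := pd1 A₂ p - pd2 A₁ p + crossProduct (A₁ p) (A₂ p)
    n p ⬝ᵥ crossProduct D₁n D₂n - n p ⬝ᵥ F₁₂ =
      n p ⬝ᵥ crossProduct (pd1 n p) (pd2 n p)
        + spd2 (fun q => n q ⬝ᵥ A₁ q) p - spd1 (fun q => n q ⬝ᵥ A₂ q) p := by
  intro D₁n D₂n F₁₂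
  have e1 : spd2 (fun q => n q ⬝ᵥ A₁ q) p = pd2 n p ⬝ᵥ A₁ p + n p ⬝ᵥ pd2 A₁ p :=
    fderiv_dot n A₁ hn hA₁ p (0, 1)
  have e2 : spd1 (fun q => n q ⬝ᵥ A₂ q) p = pd1 n p ⬝ᵥ A₂ p + n p ⬝ᵥ pd1 A₂ p :=
    fderiv_dot n A₂ hn hA₂ p (1, 0)
  have hb : n p ⬝ᵥ pd1 n p = 0 := dot_fderiv_self_eq_zero n hn hunit p (1, 0)
  have hc : n p ⬝ᵥ pd2 n p = 0 := dot_fderiv_self_eq_zero n hn hunit p (0, 1)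
  have hu := hunit p
  rw [e1, e2]
  simp only [D₁n, D₂n, F₁₂, cross_apply, dotProduct, Fin.sum_univ_three,
    Pi.add_apply, Pi.sub_apply, Matrix.cons_val_zero, Matrix.cons_val_one, Matrix.head_cons,
    Matrix.cons_val_two, Matrix.tail_cons] at *
  set a0 := n p 0; set a1 := n p 1; set a2 := n p 2
  set b0 := pd1 n p 0; set b1 := pd1 n p 1; set b2 := pd1 n p 2
  set c0 := pd2 n p 0; set c1 := pd2 n p 1; set c2 := pd2 n p 2
  set u0 := A₁ p 0; set u1 := A₁ p 1; set u2 := A₁ p 2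
  set v0 := A₂ p 0; set v1 := A₂ p 1; set v2 := A₂ p 2
  linear_combination (a0*(u1*v2-u2*v1)+a1*(u2*v0-u0*v2)+a2*(u0*v1-u1*v0)
      - (b0*v0+b1*v1+b2*v2) + (c0*u0+c1*u1+c2*u2)) * hu
    + (a0*v0+a1*v1+a2*v2) * hb - (a0*u0+a1*u1+a2*u2) * hc
end

section
/- Under the inverse stereographic projection n₁ + i n₂ = 2w/(1+|w|²), n₃ = (1-|w|²)/(1+|w|²) for a smooth complex-valued function w on ℝ², the Bogomol'nyi equation D₁n = -n × D₂n (with Dᵢn = ∂ᵢn - κ eᵢ^{-α} × n) is equivalent at points where w ≠ ∞ to the complex equation ∂_{z̄} w = (i/2) κ e^{iα} w², where ∂_{z̄} = (1/2)(∂₁ + i∂₂). -/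
open Matrix Real Complex

private lemma nderiv (w : ℝ × ℝ → ℂ) (hw : ContDiff ℝ (⊤ : ℕ∞) w) (p : ℝ × ℝ) (e : ℝ × ℝ) :
    fderiv ℝ (fun q => ![2 * (w q).re / (1 + Complex.normSq (w q)),
        2 * (w q).im / (1 + Complex.normSq (w q)),
        (1 - Complex.normSq (w q)) / (1 + Complex.normSq (w q))]) p e =
    ![(2 * (fderiv ℝ w p e).re * (1 + Complex.normSq (w p)) -
        2 * (w p).re * (2 * (w p).re * (fderiv ℝ w p e).re + 2 * (w p).im * (fderiv ℝ w p e).im)) /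
        (1 + Complex.normSq (w p)) ^ 2,
      (2 * (fderiv ℝ w p e).im * (1 + Complex.normSq (w p)) -
        2 * (w p).im * (2 * (w p).re * (fderiv ℝ w p e).re + 2 * (w p).im * (fderiv ℝ w p e).im)) /
        (1 + Complex.normSq (w p)) ^ 2,
      (-(2 * (w p).re * (fderiv ℝ w p e).re + 2 * (w p).im * (fderiv ℝ w p e).im) *
          (1 + Complex.normSq (w p)) -
        (1 - Complex.normSq (w p)) * (2 * (w p).re * (fderiv ℝ w p e).re + 2 * (w p).im * (fderiv ℝ w p e).im)) /
        (1 + Complex.normSq (w p)) ^ 2] := by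
  have hwd : HasFDerivAt w (fderiv ℝ w p) p := (hw.differentiable (by simp) p).hasFDerivAt
  have hu : HasFDerivAt (fun q => (w q).re) (Complex.reCLM.comp (fderiv ℝ w p)) p :=
    (Complex.reCLM.hasFDerivAt).comp p hwd
  have hv : HasFDerivAt (fun q => (w q).im) (Complex.imCLM.comp (fderiv ℝ w p)) p :=
    (Complex.imCLM.hasFDerivAt).comp p hwd
  have hns : HasFDerivAt (fun q => Complex.normSq (w q))
      (((w p).re • Complex.reCLM.comp (fderiv ℝ w p) + (w p).re • Complex.reCLM.comp (fderiv ℝ w p)) +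
       ((w p).im • Complex.imCLM.comp (fderiv ℝ w p) + (w p).im • Complex.imCLM.comp (fderiv ℝ w p))) p := by
    have h : (fun q => Complex.normSq (w q)) = fun q => (w q).re * (w q).re + (w q).im * (w q).im := by
      funext q; exact Complex.normSq_apply _
    rw [h]
    exact (hu.mul hu).add (hv.mul hv)
  have hr : (0:ℝ) < 1 + Complex.normSq (w p) := by
    have := Complex.normSq_nonneg (w p); linarith
  have hden : HasFDerivAt (fun q => 1 + Complex.normSq (w q)) _ p := hns.const_add 1
  have hinv := (hasFDerivAt_inv hr.ne').comp p hden
  have h0 : HasFDerivAt (fun q => 2 * (w q).re * (1 + Complex.normSq (w q))⁻¹) _ p :=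
    (hu.const_mul (2:ℝ)).mul hinv
  have h1 : HasFDerivAt (fun q => 2 * (w q).im * (1 + Complex.normSq (w q))⁻¹) _ p :=
    (hv.const_mul (2:ℝ)).mul hinv
  have h2 : HasFDerivAt (fun q => (1 - Complex.normSq (w q)) * (1 + Complex.normSq (w q))⁻¹) _ p :=
    (hns.const_sub (1:ℝ)).mul hinv
  have hn : (fun q => ![2 * (w q).re / (1 + Complex.normSq (w q)),
        2 * (w q).im / (1 + Complex.normSq (w q)),
        (1 - Complex.normSq (w q)) / (1 + Complex.normSq (w q))]) =
      (fun q (i : Fin 3) => ![fun q => 2 * (w q).re * (1 + Complex.normSq (w q))⁻¹,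
        fun q => 2 * (w q).im * (1 + Complex.normSq (w q))⁻¹,
        fun q => (1 - Complex.normSq (w q)) * (1 + Complex.normSq (w q))⁻¹] i q) := by
    funext q i; fin_cases i <;> rfl
  rw [hn]
  rw [fderiv_pi (by
    intro i
    fin_cases i
    exacts [h0.differentiableAt, h1.differentiableAt, h2.differentiableAt])]
  have he0 := congrArg (fun (L : (ℝ × ℝ) →L[ℝ] ℝ) => L e) h0.fderiv
  have he1 := congrArg (fun (L : (ℝ × ℝ) →L[ℝ] ℝ) => L e) h1.fderiv
  have he2 := congrArg (fun (L : (ℝ × ℝ) →L[ℝ] ℝ) => L e) h2.fderiv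
  simp only [ContinuousLinearMap.smul_apply, ContinuousLinearMap.sub_apply,
    ContinuousLinearMap.add_apply, ContinuousLinearMap.neg_apply,
    ContinuousLinearMap.comp_apply, ContinuousLinearMap.smulRight_apply,
    ContinuousLinearMap.one_apply, Complex.reCLM_apply, Complex.imCLM_apply, ContinuousLinearMap.toSpanSingleton_apply,
    Function.comp_apply, smul_eq_mul] at he0 he1 he2
  funext i
  fin_cases i
  · show (fderiv ℝ (fun q => 2 * (w q).re * (1 + Complex.normSq (w q))⁻¹) p) e = _
    rw [he0]; show _ = (2 * (fderiv ℝ w p e).re * (1 + Complex.normSq (w p)) -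
        2 * (w p).re * (2 * (w p).re * (fderiv ℝ w p e).re + 2 * (w p).im * (fderiv ℝ w p e).im)) /
        (1 + Complex.normSq (w p)) ^ 2
    field_simp; ring
  · show (fderiv ℝ (fun q => 2 * (w q).im * (1 + Complex.normSq (w q))⁻¹) p) e = _
    rw [he1]; show _ = (2 * (fderiv ℝ w p e).im * (1 + Complex.normSq (w p)) -
        2 * (w p).im * (2 * (w p).re * (fderiv ℝ w p e).re + 2 * (w p).im * (fderiv ℝ w p e).im)) /
        (1 + Complex.normSq (w p)) ^ 2
    field_simp; ring
  · show (fderiv ℝ (fun q => (1 - Complex.normSq (w q)) * (1 + Complex.normSq (w q))⁻¹) p) e = _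
    rw [he2]; show _ = (-(2 * (w p).re * (fderiv ℝ w p e).re + 2 * (w p).im * (fderiv ℝ w p e).im) *
          (1 + Complex.normSq (w p)) -
        (1 - Complex.normSq (w p)) * (2 * (w p).re * (fderiv ℝ w p e).re + 2 * (w p).im * (fderiv ℝ w p e).im)) /
        (1 + Complex.normSq (w p)) ^ 2
    field_simp; ring

set_option maxHeartbeats 1600000

noncomputable def cpd1 (f : ℝ × ℝ → ℂ) (p : ℝ × ℝ) : ℂ := fderiv ℝ f p (1, 0)

noncomputable def cpd2 (f : ℝ × ℝ → ℂ) (p : ℝ × ℝ) : ℂ := fderiv ℝ f p (0, 1)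

/-- The antiholomorphic derivative `∂_{z̄} = (1/2)(∂₁ + i ∂₂)`. -/
noncomputable def dbar (f : ℝ × ℝ → ℂ) (p : ℝ × ℝ) : ℂ :=
  (1 / 2) * (cpd1 f p + Complex.I * cpd2 f p)

/-- Under inverse stereographic projection, the Bogomol'nyi equation `D₁n = -n × D₂n`
is equivalent to the complex equation `∂_{z̄} w = (i/2) κ e^{iα} w²`. -/
theorem bogomolnyi_stereographic
    (w : ℝ × ℝ → ℂ) (hw : ContDiff ℝ (⊤ : ℕ∞) w) (κ α : ℝ) (hκ : 0 < κ) :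
    let n : ℝ × ℝ → Fin 3 → ℝ := fun p =>
      ![2 * (w p).re / (1 + Complex.normSq (w p)),
        2 * (w p).im / (1 + Complex.normSq (w p)),
        (1 - Complex.normSq (w p)) / (1 + Complex.normSq (w p))]
    ((∀ p, pd1 n p - κ • crossProduct ![Real.cos α, -Real.sin α, 0] (n p) =
        -(crossProduct (n p) (pd2 n p - κ • crossProduct ![Real.sin α, Real.cos α, 0] (n p)))) ↔
      (∀ p, dbar w p = (Complex.I / 2) * κ * Complex.exp (Complex.I * α) * (w p) ^ 2)) := by

  intro n
  refine forall_congr' fun p => ?_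
  have hn : n = (fun p => ![2 * (w p).re / (1 + Complex.normSq (w p)),
        2 * (w p).im / (1 + Complex.normSq (w p)),
        (1 - Complex.normSq (w p)) / (1 + Complex.normSq (w p))]) := rfl
  rw [hn]
  simp only [pd1, pd2, dbar, cpd1, cpd2]
  rw [nderiv w hw p (1, 0), nderiv w hw p (0, 1)]
  rw [funext_iff]
  rw [show (Complex.I * (α:ℂ)) = (α:ℂ) * Complex.I from by ring, Complex.exp_mul_I]
  simp only [cross_apply, Fin.forall_fin_succ, Fin.forall_fin_zero_pi,
    Pi.sub_apply, Pi.neg_apply, Pi.smul_apply, smul_eq_mul,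
    Matrix.cons_val_zero, Matrix.cons_val_one, Matrix.head_cons,
    Matrix.cons_val_two, Matrix.tail_cons, Complex.ext_iff, Complex.normSq_apply,
    Complex.mul_re, Complex.mul_im, Complex.add_re, Complex.add_im, Complex.I_re,
    Complex.I_im, Complex.ofReal_re, Complex.ofReal_im, Complex.div_re, Complex.div_im,
    Complex.cos_ofReal_re, Complex.sin_ofReal_re, Complex.cos_ofReal_im, Complex.sin_ofReal_im,
    Complex.normSq_ofNat, Complex.ofReal_cos, Complex.ofReal_sin, pow_two]
  set u := (w p).re with hu
  set v := (w p).im with hv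
  set a := (fderiv ℝ w p (1, 0)).re with ha
  set b := (fderiv ℝ w p (1, 0)).im with hb
  set c := (fderiv ℝ w p (0, 1)).re with hc
  set d := (fderiv ℝ w p (0, 1)).im with hd
  simp only [Matrix.cons_val_succ, Matrix.cons_val_zero, Matrix.cons_val_one, Matrix.head_cons,
    Complex.one_re, Complex.one_im, Complex.re_ofNat, Complex.im_ofNat, IsEmpty.forall_iff,
    Fin.succ_zero_eq_one, Matrix.cons_val_two, Matrix.tail_cons, Complex.I_re, Complex.I_im]
  norm_num
  clear_value u v a b c d
  clear hu hv ha hb hc hd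
  clear hw hn
  have hden : (1:ℝ) + (u * u + v * v) ≠ 0 := by nlinarith [sq_nonneg u, sq_nonneg v]
  constructor
  · rintro ⟨h1, h2, h3⟩
    field_simp at h1 h2 h3
    have key1 : (a - d + κ * (Real.sin α * (u * u - v * v) + 2 * u * v * Real.cos α)) *
        ((1 + (u * u + v * v)) ^ 6) = 0 := by
      linear_combination (1 + (u * u + v * v)) ^ 4 * (((1 + u * u) / 2) * h1 + (u * v / 2) * h2 -
        (u * (1 + (u * u + v * v)) / 2) * h3)
    have key2 : (b + c - κ * (Real.cos α * (u * u - v * v) - 2 * u * v * Real.sin α)) *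
        ((1 + (u * u + v * v)) ^ 6) = 0 := by
      linear_combination (1 + (u * u + v * v)) ^ 4 * ((u * v / 2) * h1 + ((1 + v * v) / 2) * h2 -
        (v * (1 + (u * u + v * v)) / 2) * h3)
    have hp6 : ((1:ℝ) + (u * u + v * v)) ^ 6 ≠ 0 := pow_ne_zero _ hden
    have hF1 := (mul_eq_zero.mp key1).resolve_right hp6
    have hF2 := (mul_eq_zero.mp key2).resolve_right hp6
    exact ⟨by linear_combination (1/2 : ℝ) * hF1, by linear_combination (1/2 : ℝ) * hF2⟩
  · rintro ⟨f1, f2⟩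
    field_simp at f1 f2
    refine ⟨?_, ?_, ?_⟩ <;> field_simp
    · linear_combination (4:ℝ) * (((1 + (u * u + v * v)) ^ 1 * (1 + v * v - u * u) / 2) * f1 -
        ((1 + (u * u + v * v)) ^ 1 * (u * v)) * f2)
    · linear_combination (4:ℝ) * ((-((1 + (u * u + v * v)) ^ 1 * (u * v))) * f1 +
        ((1 + (u * u + v * v)) ^ 1 * (1 + u * u - v * v) / 2) * f2)
    · linear_combination (2:ℝ) * ((-((1 + (u * u + v * v)) ^ 1 * u)) * f1 -
        ((1 + (u * u + v * v)) ^ 1 * v) * f2)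
end

section
/- For any real A with 0 ≤ A and A ≠ 1, and any real χ, the integral (1/2π) ∫₀^{2π} (A² - 1)/(1 + A² + 2A cos(2φ + χ)) dφ equals 1 if A > 1 and equals -1 if A < 1. -/
/-!
For `|A| < 1` the integrand is `-1 + 2 (A² + A cos u) / (1 + A² + 2A cos u)` with `u = 2φ + χ`,
and the second term is the derivative of the `2π`-periodic function
`u ↦ 2 arctan (A sin u / (1 + A cos u))`, so the integral over a period is `-2π`.
For `A > 1`, replacing `A` by `A⁻¹` only flips the sign of the integrand.
-/

open Real intervalIntegral

lemma neg_abs_le_mul_cos (A u : ℝ) : -|A| ≤ A * cos u :=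
  calc -|A| ≤ -|A * cos u| := by
        rw [abs_mul]
        exact neg_le_neg (mul_le_of_le_one_right (abs_nonneg A) (abs_cos_le_one u))
    _ ≤ A * cos u := neg_abs_le _

lemma one_add_sq_add_two_mul_cos_pos {A : ℝ} (hA : |A| < 1) (u : ℝ) :
    0 < 1 + A ^ 2 + 2 * A * cos u := by
  nlinarith [neg_abs_le_mul_cos A u, sq_abs A, abs_nonneg A]

lemma hasDerivAt_arctan_mul_sin_div_one_add_mul_cos {A : ℝ} (hA : |A| < 1) (u : ℝ) :
    HasDerivAt (fun u => arctan (A * sin u / (1 + A * cos u)))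
      ((A ^ 2 + A * cos u) / (1 + A ^ 2 + 2 * A * cos u)) u := by
  have hden : 0 < 1 + A * cos u := by linarith [neg_abs_le_mul_cos A u]
  have hq : HasDerivAt (fun u => A * sin u / (1 + A * cos u))
      ((A * cos u * (1 + A * cos u) - A * sin u * (A * -sin u)) / (1 + A * cos u) ^ 2) u :=
    ((hasDerivAt_sin u).const_mul A).div (((hasDerivAt_cos u).const_mul A).const_add 1) hden.ne'
  refine hq.arctan.congr_deriv ?_
  have h1q : 1 + (A * sin u / (1 + A * cos u)) ^ 2 =
      (1 + A ^ 2 + 2 * A * cos u) / (1 + A * cos u) ^ 2 := by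
    field_simp
    linear_combination A ^ 2 * sin_sq_add_cos_sq u
  have hD := (one_add_sq_add_two_mul_cos_pos hA u).ne'
  rw [h1q]
  -- keeps the denominator atomic: `field_simp` would otherwise reorder it and lose track of `hD`
  set D := 1 + A ^ 2 + 2 * A * cos u
  field_simp
  linear_combination A ^ 2 * sin_sq_add_cos_sq u

theorem integral_poisson_of_abs_lt_one {A : ℝ} (hA : |A| < 1) (χ : ℝ) :
    ∫ φ in (0 : ℝ)..2 * π, (A ^ 2 - 1) / (1 + A ^ 2 + 2 * A * cos (2 * φ + χ)) = -(2 * π) := by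
  set F : ℝ → ℝ := fun φ => arctan (A * sin (2 * φ + χ) / (1 + A * cos (2 * φ + χ))) - φ
  have hF : ∀ φ, HasDerivAt F ((A ^ 2 - 1) / (1 + A ^ 2 + 2 * A * cos (2 * φ + χ))) φ := by
    intro φ
    have hlin : HasDerivAt (fun φ : ℝ => 2 * φ + χ) 2 φ := by
      simpa using ((hasDerivAt_id φ).const_mul 2).add_const χ
    refine (((hasDerivAt_arctan_mul_sin_div_one_add_mul_cos hA _).comp φ hlin).sub
      (hasDerivAt_id φ)).congr_deriv ?_
    rw [div_mul_eq_mul_div, div_sub_one (one_add_sq_add_two_mul_cos_pos hA _).ne']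
    ring
  have hcont : Continuous fun φ => (A ^ 2 - 1) / (1 + A ^ 2 + 2 * A * cos (2 * φ + χ)) :=
    continuous_const.div (by fun_prop) fun φ => (one_add_sq_add_two_mul_cos_pos hA _).ne'
  rw [integral_eq_sub_of_hasDerivAt (fun φ _ => hF φ) (hcont.intervalIntegrable _ _)]
  have hperiod : 2 * (2 * π) + χ = χ + 2 * π + 2 * π := by ring
  simp only [F, hperiod, mul_zero, zero_add, sin_add_two_pi, cos_add_two_pi]
  ring

lemma sq_sub_one_div_eq_neg_inv {A : ℝ} (hA : A ≠ 0) (u : ℝ) :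
    (A ^ 2 - 1) / (1 + A ^ 2 + 2 * A * cos u) =
      -((A⁻¹ ^ 2 - 1) / (1 + A⁻¹ ^ 2 + 2 * A⁻¹ * cos u)) := by
  calc (A ^ 2 - 1) / (1 + A ^ 2 + 2 * A * cos u)
      = A ^ 2 * (1 - A⁻¹ ^ 2) / (A ^ 2 * (1 + A⁻¹ ^ 2 + 2 * A⁻¹ * cos u)) := by
        congr 1
        · field_simp
        · field_simp; ring
    _ = _ := by rw [mul_div_mul_left _ _ (pow_ne_zero 2 hA), ← neg_div, neg_sub]

/-- The degree integral of the linear skyrmion solution: for `0 ≤ A`, `A ≠ 1`,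
`(1/2π) ∫₀^{2π} (A²-1)/(1+A²+2A cos(2φ+χ)) dφ` equals `1` if `A > 1` and `-1` if `A < 1`. -/
theorem degree_integral_linear_solution (A χ : ℝ) (hA : 0 ≤ A) (hA1 : A ≠ 1) :
    (1 / (2 * π)) * ∫ φ in (0:ℝ)..(2 * π),
        (A ^ 2 - 1) / (1 + A ^ 2 + 2 * A * Real.cos (2 * φ + χ)) =
      if 1 < A then 1 else -1 := by
  split_ifs with h
  · have hinv : |A⁻¹| < 1 := by
      rw [abs_inv, abs_of_pos (zero_lt_one.trans h)]
      exact inv_lt_one_of_one_lt₀ h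
    simp only [sq_sub_one_div_eq_neg_inv (zero_lt_one.trans h).ne']
    rw [integral_neg, integral_poisson_of_abs_lt_one hinv]
    field_simp
  · have hlt : |A| < 1 := by
      rw [abs_of_nonneg hA]
      exact lt_of_le_of_ne (not_lt.mp h) hA1
    rw [integral_poisson_of_abs_lt_one hlt]
    field_simp
end

section
/- For any real A ≥ 0 with A ≠ 1 and any real χ, the integral (1/2π) ∫₀^{2π} (2 + 2A cos(2φ + χ))/(1 + A² + 2A cos(2φ + χ)) dφ equals 0 if A > 1 and equals 2 if A < 1. For A = 1 (with χ such that the denominator vanishes only on a measure-zero set) the integral equals 1. -/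
/-!
Since `(2 + 2A cos θ)/(1 + A² + 2A cos θ) = 1 + (1 - A²)/|e^{iθ} + A|²`, the integral is `2π` plus
the integral of the Poisson kernel of the unit disc at `-A` (for `A < 1`: the Poisson formula for
the constant harmonic function `1` gives `2π`) or minus the Poisson kernel at `-1/A` (for `A > 1`).
The substitution `θ = 2φ + χ` does not change the integral by `2π`-periodicity, and for `A = 1`
the integrand equals `1` off the countable set where `cos (2φ + χ) = -1`.
-/

open Real intervalIntegral MeasureTheory

theorem Function.Periodic.intervalIntegral_comp_int_mul_add {E : Type*} [NormedAddCommGroup E]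
    [NormedSpace ℝ E] {f : ℝ → E} {T : ℝ}
    (hf : Function.Periodic f T) (h_int : ∀ t₁ t₂, IntervalIntegrable f volume t₁ t₂)
    {n : ℤ} (hn : n ≠ 0) (c : ℝ) :
    ∫ x in 0..T, f (n * x + c) = ∫ x in 0..T, f x := by
  have hn' : (n : ℝ) ≠ 0 := Int.cast_ne_zero.mpr hn
  rw [integral_comp_mul_add f hn', mul_zero, zero_add, add_comm _ c, ← zsmul_eq_mul,
    hf.intervalIntegral_add_zsmul_eq n c h_int, hf.intervalIntegral_add_eq c 0, zero_add,
    ← Int.cast_smul_eq_zsmul ℝ, smul_smul, inv_mul_cancel₀ hn', one_smul]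

theorem one_add_sq_add_two_mul_cos_pos_s11 {r : ℝ} (hr : |r| ≠ 1) (θ : ℝ) :
    0 < 1 + r ^ 2 + 2 * r * cos θ := by
  have hcos : -|r| ≤ r * cos θ := by
    have := abs_mul r (cos θ) ▸ mul_le_of_le_one_right (abs_nonneg r) (abs_cos_le_one θ)
    exact neg_le_of_abs_le this
  have : 0 < (1 - |r|) ^ 2 := by
    have : 1 - |r| ≠ 0 := sub_ne_zero.mpr (Ne.symm hr)
    positivity
  nlinarith [sq_abs r]

theorem poissonKernel_zero_neg_circleMap (r θ : ℝ) :
    poissonKernel 0 (-r : ℂ) (circleMap 0 1 θ) = (1 - r ^ 2) / (1 + r ^ 2 + 2 * r * cos θ) := by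
  rw [poissonKernel_def, sub_zero, sub_zero, norm_circleMap_zero, norm_neg, Complex.norm_real,
    sub_neg_eq_add, ← Complex.normSq_eq_norm_sq, circleMap_zero, Complex.normSq_apply]
  simp only [abs_one, one_pow, norm_eq_abs, sq_abs, Complex.ofReal_one, one_mul, Complex.add_re,
    Complex.exp_ofReal_mul_I_re, Complex.ofReal_re, Complex.add_im, Complex.exp_ofReal_mul_I_im,
    Complex.ofReal_im, add_zero]
  congr 1
  linear_combination sin_sq_add_cos_sq θ

theorem integral_one_sub_sq_div_one_add_sq_add_two_mul_cos {r : ℝ} (hr : |r| < 1) :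
    ∫ θ in 0..2 * π, (1 - r ^ 2) / (1 + r ^ 2 + 2 * r * cos θ) = 2 * π := by
  have h := (InnerProductSpace.harmonicOnNhd_const (1 : ℝ)).circleAverage_poissonKernel_smul
    (c := 0) (R := 1) (w := -r) (by simpa using hr)
  simp only [circleAverage_def, smul_eq_mul, Pi.mul_apply, mul_one,
    poissonKernel_zero_neg_circleMap] at h
  field_simp at h
  linarith

theorem integral_one_sub_sq_div_one_add_sq_add_two_mul_cos_of_one_lt_abs {r : ℝ} (hr : 1 < |r|) :
    ∫ θ in 0..2 * π, (1 - r ^ 2) / (1 + r ^ 2 + 2 * r * cos θ) = -(2 * π) := by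
  have hr0 : r ≠ 0 := abs_pos.mp (one_pos.trans hr)
  have hinv : |r⁻¹| < 1 := by rw [abs_inv]; exact inv_lt_one_of_one_lt₀ hr
  calc _ = ∫ θ in 0..2 * π, -((1 - r⁻¹ ^ 2) / (1 + r⁻¹ ^ 2 + 2 * r⁻¹ * cos θ)) := by
        refine integral_congr fun θ _ => ?_
        have hD := one_add_sq_add_two_mul_cos_pos_s11 hr.ne' θ
        have hD' := one_add_sq_add_two_mul_cos_pos_s11 hinv.ne θ
        field_simp
        ring
    _ = -(2 * π) := by
        rw [intervalIntegral.integral_neg, integral_one_sub_sq_div_one_add_sq_add_two_mul_cos hinv]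

theorem integral_two_add_two_mul_cos_div_comp_two_mul_add {A : ℝ} (hA : |A| ≠ 1) (χ : ℝ) :
    ∫ φ in 0..2 * π, (2 + 2 * A * cos (2 * φ + χ)) / (1 + A ^ 2 + 2 * A * cos (2 * φ + χ))
      = 2 * π + ∫ θ in 0..2 * π, (1 - A ^ 2) / (1 + A ^ 2 + 2 * A * cos θ) := by
  have hD := one_add_sq_add_two_mul_cos_pos_s11 hA
  have hperiodic : Function.Periodic
      (fun θ => (2 + 2 * A * cos θ) / (1 + A ^ 2 + 2 * A * cos θ)) (2 * π) := fun θ => by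
    simp only [cos_add_two_pi]
  have hcont : Continuous fun θ => (2 + 2 * A * cos θ) / (1 + A ^ 2 + 2 * A * cos θ) :=
    .div (by fun_prop) (by fun_prop) fun θ => (hD θ).ne'
  have hcont' : Continuous fun θ => (1 - A ^ 2) / (1 + A ^ 2 + 2 * A * cos θ) :=
    .div (by fun_prop) (by fun_prop) fun θ => (hD θ).ne'
  calc _ = ∫ θ in 0..2 * π, (2 + 2 * A * cos θ) / (1 + A ^ 2 + 2 * A * cos θ) := by
        exact_mod_cast hperiodic.intervalIntegral_comp_int_mul_add
          (fun _ _ => hcont.intervalIntegrable _ _) two_ne_zero χ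
    _ = ∫ θ in 0..2 * π, (1 + (1 - A ^ 2) / (1 + A ^ 2 + 2 * A * cos θ)) := by
        refine integral_congr fun θ _ => ?_
        have := hD θ
        field_simp
        ring
    _ = 2 * π + ∫ θ in 0..2 * π, (1 - A ^ 2) / (1 + A ^ 2 + 2 * A * cos θ) := by
        rw [integral_add intervalIntegrable_const (hcont'.intervalIntegrable _ _),
          intervalIntegral.integral_const, smul_eq_mul, mul_one, sub_zero]

theorem ae_cos_mul_add_ne_neg_one {a : ℝ} (ha : a ≠ 0) (b : ℝ) :
    ∀ᵐ x : ℝ, cos (a * x + b) ≠ -1 := by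
  refine measure_mono_null (fun x (hx : ¬cos (a * x + b) ≠ -1) => ?_)
    ((Set.countable_range fun k : ℤ => (π + k * (2 * π) - b) / a).measure_zero volume)
  obtain ⟨k, hk⟩ := cos_eq_neg_one_iff.mp (not_not.mp hx)
  exact ⟨k, by beta_reduce; rw [hk, add_sub_cancel_right, mul_div_cancel_left₀ x ha]⟩

/-- The regularized vortex-strength integral of the linear solution:
`(1/2π) ∫₀^{2π} (2+2A cos(2φ+χ))/(1+A²+2A cos(2φ+χ)) dφ` equals `0` if `A > 1`,
`2` if `0 ≤ A < 1`, and `1` if `A = 1`. -/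
theorem vortex_strength_integral_linear_solution (A χ : ℝ) (hA : 0 ≤ A) :
    (1 < A → (1 / (2 * π)) * ∫ φ in (0:ℝ)..(2 * π),
        (2 + 2 * A * Real.cos (2 * φ + χ)) / (1 + A ^ 2 + 2 * A * Real.cos (2 * φ + χ)) = 0)
    ∧ (A < 1 → (1 / (2 * π)) * ∫ φ in (0:ℝ)..(2 * π),
        (2 + 2 * A * Real.cos (2 * φ + χ)) / (1 + A ^ 2 + 2 * A * Real.cos (2 * φ + χ)) = 2)
    ∧ (A = 1 → (1 / (2 * π)) * ∫ φ in (0:ℝ)..(2 * π),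
        (2 + 2 * A * Real.cos (2 * φ + χ)) / (1 + A ^ 2 + 2 * A * Real.cos (2 * φ + χ)) = 1) := by
  refine ⟨fun hA1 => ?_, fun hA1 => ?_, fun hA1 => ?_⟩
  · replace hA1 : 1 < |A| := by rwa [abs_of_nonneg hA]
    rw [integral_two_add_two_mul_cos_div_comp_two_mul_add hA1.ne' χ,
      integral_one_sub_sq_div_one_add_sq_add_two_mul_cos_of_one_lt_abs hA1, add_neg_cancel,
      mul_zero]
  · replace hA1 : |A| < 1 := by rwa [abs_of_nonneg hA]
    rw [integral_two_add_two_mul_cos_div_comp_two_mul_add hA1.ne χ,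
      integral_one_sub_sq_div_one_add_sq_add_two_mul_cos hA1]
    field_simp
    ring
  · subst hA1
    have hae : ∀ᵐ φ : ℝ, φ ∈ Set.uIoc 0 (2 * π) → (2 + 2 * 1 * cos (2 * φ + χ)) /
        (1 + 1 ^ 2 + 2 * 1 * cos (2 * φ + χ)) = 1 := by
      filter_upwards [ae_cos_mul_add_ne_neg_one two_ne_zero χ] with φ hφ _
      rw [show (1 : ℝ) + 1 ^ 2 = 2 by norm_num, div_self]
      contrapose! hφ
      linarith
    rw [integral_congr_ae hae, intervalIntegral.integral_const, smul_eq_mul, mul_one, sub_zero,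
      one_div_mul_cancel two_pi_pos.ne']
end

section
/- The function θ(r) = 2 arctan(2κ/(μ² r)) solves the radial Euler–Lagrange equation θ'' = -θ'/r + sin(2θ)/(2r²) - 2κ sin²θ/r + μ² sinθ (1 - cosθ) for all r > 0, and satisfies the boundary conditions θ(r) → π as r → 0⁺ and θ(r) → 0 as r → ∞. -/
/-!
With `a = 2κ/μ²` the profile is `θ r = 2 arctan (a / r)`. Writing `x = a / r`, the double-angle
formulas give `sin θ = 2x/(1+x²)` and `cos θ = (1-x²)/(1+x²)`, while `θ' = -2a/(r²+a²)` and
`θ'' = 4ar/(r²+a²)²`; after substituting `κ = μ² a / 2` the Euler–Lagrange equation becomes a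
rational identity in `a`, `μ` and `r`. The boundary values come from `arctan → π/2` at `+∞` and
`arctan 0 = 0`.
-/

open Real Filter Topology

namespace Real

theorem sin_two_mul_arctan (x : ℝ) : sin (2 * arctan x) = 2 * x / (1 + x ^ 2) := by
  have hsin : sin (arctan x) = x * cos (arctan x) := by
    rw [sin_arctan, cos_arctan]
    ring
  rw [sin_two_mul, hsin, mul_assoc, mul_assoc, ← sq, cos_sq_arctan]
  ring

theorem cos_two_mul_arctan (x : ℝ) : cos (2 * arctan x) = (1 - x ^ 2) / (1 + x ^ 2) := by
  have : (1 : ℝ) + x ^ 2 ≠ 0 := by positivity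
  rw [cos_two_mul, cos_sq_arctan]
  field_simp
  ring

end Real

section TwoArctanDiv

variable (a : ℝ) {r : ℝ}

theorem hasDerivAt_two_arctan_div (hr : r ≠ 0) :
    HasDerivAt (fun x => 2 * arctan (a / x)) (-2 * a / (r ^ 2 + a ^ 2)) r := by
  have hquot : HasDerivAt (fun x => a / x) (-a / r ^ 2) r := by
    simpa [div_eq_mul_inv, neg_div] using (hasDerivAt_inv hr).const_mul a
  refine (hquot.arctan.const_mul 2).congr_deriv ?_
  field_simp

theorem deriv_deriv_two_arctan_div (hr : r ≠ 0) :
    deriv (deriv fun x => 2 * arctan (a / x)) r = 4 * a * r / (r ^ 2 + a ^ 2) ^ 2 := by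
  have hderiv : deriv (fun x => 2 * arctan (a / x)) =ᶠ[𝓝 r] fun x => -2 * a / (x ^ 2 + a ^ 2) := by
    filter_upwards [isOpen_ne.mem_nhds hr] with x hx using (hasDerivAt_two_arctan_div a hx).deriv
  have hden_ne : r ^ 2 + a ^ 2 ≠ 0 := by positivity
  have hden : HasDerivAt (fun x => x ^ 2 + a ^ 2) (2 * r) r := by
    simpa using (hasDerivAt_pow 2 r).add_const (a ^ 2)
  have hquot : HasDerivAt (fun x => -2 * a / (x ^ 2 + a ^ 2))
      ((0 * (r ^ 2 + a ^ 2) - -2 * a * (2 * r)) / (r ^ 2 + a ^ 2) ^ 2) r :=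
    (hasDerivAt_const r (-2 * a)).div hden hden_ne
  rw [hderiv.deriv_eq, hquot.deriv]
  ring

theorem tendsto_two_arctan_div_nhdsGT_zero (ha : 0 < a) :
    Tendsto (fun x => 2 * arctan (a / x)) (𝓝[>] 0) (𝓝 π) := by
  have hquot : Tendsto (fun x => a / x) (𝓝[>] 0) atTop := by
    simpa [div_eq_mul_inv] using tendsto_inv_nhdsGT_zero.const_mul_atTop ha
  have := ((tendsto_arctan_atTop.mono_right nhdsWithin_le_nhds).comp hquot).const_mul 2
  rwa [mul_div_cancel₀ π two_ne_zero] at this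

theorem tendsto_two_arctan_div_atTop : Tendsto (fun x => 2 * arctan (a / x)) atTop (𝓝 0) := by
  have hquot : Tendsto (fun x => a / x) atTop (𝓝 0) := tendsto_const_nhds.div_atTop tendsto_id
  simpa using ((continuous_arctan.tendsto 0).comp hquot).const_mul 2

end TwoArctanDiv

/-- The hedgehog profile `θ(r) = 2 arctan(2κ/(μ² r))` solves the radial Euler–Lagrange
equation and satisfies the boundary conditions `θ → π` as `r → 0⁺` and `θ → 0` as `r → ∞`. -/
theorem hedgehog_profile_solution (κ μ : ℝ) (hκ : 0 < κ) (hμ : 0 < μ) :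
    let θ : ℝ → ℝ := fun r => 2 * Real.arctan (2 * κ / (μ ^ 2 * r))
    (∀ r : ℝ, 0 < r →
      deriv (deriv θ) r =
        -(deriv θ r) / r + Real.sin (2 * θ r) / (2 * r ^ 2)
          - 2 * κ * (Real.sin (θ r)) ^ 2 / r
          + μ ^ 2 * Real.sin (θ r) * (1 - Real.cos (θ r)))
    ∧ Tendsto θ (nhdsWithin 0 (Set.Ioi 0)) (nhds π)
    ∧ Tendsto θ atTop (nhds 0) := by
  intro θ
  set a := 2 * κ / μ ^ 2 with ha
  have hθ : θ = fun r => 2 * arctan (a / r) := by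
    funext r
    simp only [θ, ha, div_div]
  have hκa : κ = μ ^ 2 * a / 2 := by
    rw [ha]
    field_simp
  rw [hθ]
  refine ⟨fun r hr => ?_, tendsto_two_arctan_div_nhdsGT_zero a (by positivity),
    tendsto_two_arctan_div_atTop a⟩
  rw [deriv_deriv_two_arctan_div a hr.ne', (hasDerivAt_two_arctan_div a hr.ne').deriv,
    sin_two_mul, sin_two_mul_arctan, cos_two_mul_arctan, hκa]
  field_simp
  ring
end
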